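/- Consider the interconnection of the plant with the ℓ2-controller. Let μ = 2λ_min(R + λĤᵀQĤ + ρ_gen I) > 0 and L = 2λ_max(R + λĤᵀQĤ + ρ_gen I), and assume η ∈ (0, 2μ/L²). Then for every k ≥ 0, ‖u_{k+1} − u_{k+1}*‖ ≤ α·‖u_k − u_k*‖ + η·(L_T^y·‖C‖/√(λ_min(P)))·‖x_k − x_{ss,k}‖_P + η·L_T^y·‖H − Ĥ‖·‖u_k‖ + ‖u_{k+1}* − u_k*‖, where α = √(1 − η(2μ − ηL²)) ∈ [0,1) and L_T^y = 2λ‖ĤᵀQ‖. -/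

import Mathlib

/-! The error `u_k − u_k*` follows one gradient step on the quadratic `Φ_{ℓ2,k}`, whose half-Hessian
`M = R + λĤᵀQĤ + ρ_gen I` satisfies `μ/2 ≤ M ≤ L/2`; such a step contracts by
`√(1 − η(2μ − ηL²))`. The only other contributions are the drift `u_k* − u_{k+1}*` and the gap
between the measured output `y_k` and its model `Ĥu_k + d_k`, which is
`C(x_k − x_{ss,k}) + (H − Ĥ)u_k` and enters through `2ηλĤᵀQ`. Finally
`‖x‖ ≤ ‖x‖_P / √λ_min(P)` turns the state term into a `P`-norm. -/

open Matrix BigOperators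

/-- Euclidean norm of a vector in `ℝ^a`. -/
noncomputable def euclNorm {a : ℕ} (x : Fin a → ℝ) : ℝ := Real.sqrt (∑ i, x i ^ 2)

/-- Spectral (ℓ2-operator) norm of a matrix. -/
noncomputable def spec {a b : ℕ} (M : Matrix (Fin a) (Fin b) ℝ) : ℝ :=
  ‖LinearMap.toContinuousLinearMap (Matrix.toEuclideanLin M)‖

/-- Largest eigenvalue of a symmetric matrix (Rayleigh quotient over the unit sphere). -/
noncomputable def eigMax {a : ℕ} (P : Matrix (Fin a) (Fin a) ℝ) : ℝ :=
  sSup {r : ℝ | ∃ x : Fin a → ℝ, ∑ i, x i ^ 2 = 1 ∧ r = x ⬝ᵥ P *ᵥ x}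

/-- Smallest eigenvalue of a symmetric matrix (Rayleigh quotient over the unit sphere). -/
noncomputable def eigMin {a : ℕ} (P : Matrix (Fin a) (Fin a) ℝ) : ℝ :=
  sInf {r : ℝ | ∃ x : Fin a → ℝ, ∑ i, x i ^ 2 = 1 ∧ r = x ⬝ᵥ P *ᵥ x}

/-- The `P`-weighted norm `‖x‖_P = √(xᵀ P x)`. -/
noncomputable def pnorm {a : ℕ} (P : Matrix (Fin a) (Fin a) ℝ) (x : Fin a → ℝ) : ℝ :=
  Real.sqrt (x ⬝ᵥ P *ᵥ x)

/-- The regularized objective `Φ_{ℓ2,k}(v) = vᵀRv + λ(Ĥv + d − r)ᵀQ(Ĥv + d − r) + ρ_gen ‖v‖²`. -/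
noncomputable def Phi2 {m p : ℕ} (R : Matrix (Fin m) (Fin m) ℝ) (Q : Matrix (Fin p) (Fin p) ℝ)
    (lam ρgen : ℝ) (Hhat : Matrix (Fin p) (Fin m) ℝ) (d rk : Fin p → ℝ) (v : Fin m → ℝ) : ℝ :=
  v ⬝ᵥ R *ᵥ v + lam * ((Hhat *ᵥ v + d - rk) ⬝ᵥ Q *ᵥ (Hhat *ᵥ v + d - rk))
    + ρgen * ∑ i, v i ^ 2

section EuclNorm

variable {a b : ℕ}

lemma euclNorm_eq_norm (x : Fin a → ℝ) : euclNorm x = ‖WithLp.toLp 2 x‖ := by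
  simp [euclNorm, EuclideanSpace.norm_eq, sq_abs]

lemma euclNorm_nonneg (x : Fin a → ℝ) : 0 ≤ euclNorm x := Real.sqrt_nonneg _

lemma euclNorm_sq (x : Fin a → ℝ) : euclNorm x ^ 2 = x ⬝ᵥ x := by
  rw [euclNorm, Real.sq_sqrt (Finset.sum_nonneg fun i _ => sq_nonneg _)]
  simp [dotProduct, sq]

lemma euclNorm_pos {x : Fin a → ℝ} (hx : x ≠ 0) : 0 < euclNorm x := by
  rw [euclNorm_eq_norm, norm_pos_iff]
  exact fun h => hx (congrArg WithLp.ofLp h)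

lemma euclNorm_eq_one_iff (x : Fin a → ℝ) : euclNorm x = 1 ↔ ∑ i, x i ^ 2 = 1 :=
  Real.sqrt_eq_one

lemma euclNorm_add_le (x y : Fin a → ℝ) : euclNorm (x + y) ≤ euclNorm x + euclNorm y := by
  simpa only [euclNorm_eq_norm, WithLp.toLp_add] using
    norm_add_le (WithLp.toLp 2 x) (WithLp.toLp 2 y)

lemma euclNorm_add_add_le (x y z : Fin a → ℝ) :
    euclNorm (x + y + z) ≤ euclNorm x + euclNorm y + euclNorm z :=
  (euclNorm_add_le _ _).trans (add_le_add_left (euclNorm_add_le _ _) _)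

lemma euclNorm_smul (c : ℝ) (x : Fin a → ℝ) : euclNorm (c • x) = |c| * euclNorm x := by
  simpa only [euclNorm_eq_norm, WithLp.toLp_smul, Real.norm_eq_abs] using
    norm_smul c (WithLp.toLp 2 x)

lemma euclNorm_sub_comm (x y : Fin a → ℝ) : euclNorm (x - y) = euclNorm (y - x) := by
  simpa only [euclNorm_eq_norm, WithLp.toLp_sub] using
    norm_sub_rev (WithLp.toLp 2 x) (WithLp.toLp 2 y)

lemma spec_nonneg (M : Matrix (Fin a) (Fin b) ℝ) : 0 ≤ spec M := norm_nonneg _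

lemma euclNorm_mulVec_le (M : Matrix (Fin a) (Fin b) ℝ) (v : Fin b → ℝ) :
    euclNorm (M *ᵥ v) ≤ spec M * euclNorm v := by
  simpa [euclNorm_eq_norm, spec] using
    (LinearMap.toContinuousLinearMap (Matrix.toEuclideanLin M)).le_opNorm (WithLp.toLp 2 v)

end EuclNorm

section Rayleigh

variable {a : ℕ}

def rayleighValues (P : Matrix (Fin a) (Fin a) ℝ) : Set ℝ :=
  {r : ℝ | ∃ x : Fin a → ℝ, ∑ i, x i ^ 2 = 1 ∧ r = x ⬝ᵥ P *ᵥ x}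

lemma isCompact_rayleighValues (P : Matrix (Fin a) (Fin a) ℝ) :
    IsCompact (rayleighValues P) := by
  have hsphere : rayleighValues P
      = (fun x : EuclideanSpace ℝ (Fin a) => x.ofLp ⬝ᵥ P *ᵥ x.ofLp) ''
          Metric.sphere 0 1 := by
    ext r
    simp only [rayleighValues, Set.mem_ofPred_eq, Set.mem_image, mem_sphere_zero_iff_norm]
    constructor
    · rintro ⟨x, hx, rfl⟩
      exact ⟨WithLp.toLp 2 x, by rwa [← euclNorm_eq_norm, euclNorm_eq_one_iff], rfl⟩
    · rintro ⟨x, hx, rfl⟩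
      exact ⟨x.ofLp, by rwa [← euclNorm_eq_one_iff, euclNorm_eq_norm], rfl⟩
  rw [hsphere]
  exact (isCompact_sphere 0 1).image (by fun_prop)

lemma div_euclNorm_sq_mem_rayleighValues (P : Matrix (Fin a) (Fin a) ℝ) {w : Fin a → ℝ}
    (hw : w ≠ 0) : (w ⬝ᵥ P *ᵥ w) / euclNorm w ^ 2 ∈ rayleighValues P := by
  have hw' := (euclNorm_pos hw).ne'
  refine ⟨(euclNorm w)⁻¹ • w, ?_, ?_⟩
  · rw [← euclNorm_eq_one_iff, euclNorm_smul, abs_inv, abs_of_nonneg (euclNorm_nonneg w),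
      inv_mul_cancel₀ hw']
  · simp only [smul_dotProduct, mulVec_smul, dotProduct_smul, smul_eq_mul]
    field_simp

lemma eigMin_mul_le (P : Matrix (Fin a) (Fin a) ℝ) (w : Fin a → ℝ) :
    eigMin P * euclNorm w ^ 2 ≤ w ⬝ᵥ P *ᵥ w := by
  rcases eq_or_ne w 0 with rfl | hw
  · simp [euclNorm]
  rw [← le_div_iff₀ (pow_pos (euclNorm_pos hw) 2)]
  exact csInf_le (isCompact_rayleighValues P).bddBelow (div_euclNorm_sq_mem_rayleighValues P hw)

lemma le_eigMax_mul (P : Matrix (Fin a) (Fin a) ℝ) (w : Fin a → ℝ) :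
    w ⬝ᵥ P *ᵥ w ≤ eigMax P * euclNorm w ^ 2 := by
  rcases eq_or_ne w 0 with rfl | hw
  · simp [euclNorm]
  rw [← div_le_iff₀ (pow_pos (euclNorm_pos hw) 2)]
  exact le_csSup (isCompact_rayleighValues P).bddAbove (div_euclNorm_sq_mem_rayleighValues P hw)

lemma Matrix.PosDef.eigMin_pos (ha : 0 < a) {P : Matrix (Fin a) (Fin a) ℝ} (hP : P.PosDef) :
    0 < eigMin P := by
  have hne : (rayleighValues P).Nonempty := ⟨_, div_euclNorm_sq_mem_rayleighValues P
    (w := fun _ => 1) (Function.ne_iff.2 ⟨⟨0, ha⟩, one_ne_zero⟩)⟩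
  obtain ⟨x, hx, hmin⟩ := (isCompact_rayleighValues P).sInf_mem hne
  have hx0 : x ≠ 0 := by
    rintro rfl
    simp at hx
  rw [eigMin, ← rayleighValues, hmin]
  simpa using hP.dotProduct_mulVec_pos hx0

lemma euclNorm_le_pnorm_div (P : Matrix (Fin a) (Fin a) ℝ) (hP : P.PosDef) (x : Fin a → ℝ) :
    euclNorm x ≤ pnorm P x / Real.sqrt (eigMin P) := by
  rcases eq_or_ne x 0 with rfl | hx
  · simp [euclNorm, pnorm]
  obtain ⟨i, -⟩ := Function.ne_iff.1 hx
  have hmin := PosDef.eigMin_pos i.pos hP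
  rw [le_div_iff₀ (Real.sqrt_pos.2 hmin), pnorm, ← Real.sqrt_sq (euclNorm_nonneg x),
    ← Real.sqrt_mul' _ hmin.le, mul_comm]
  exact Real.sqrt_le_sqrt (eigMin_mul_le P x)

lemma euclNorm_smul_mulVec_add_mulVec_le {m p q : ℕ} (P : Matrix (Fin a) (Fin a) ℝ)
    (hP : P.PosDef) (c : ℝ) (N : Matrix (Fin q) (Fin p) ℝ) (C : Matrix (Fin p) (Fin a) ℝ)
    (D : Matrix (Fin p) (Fin m) ℝ) (ξ : Fin a → ℝ) (v : Fin m → ℝ) :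
    euclNorm (c • (N *ᵥ (C *ᵥ ξ + D *ᵥ v)))
      ≤ |c| * spec N * (spec C * (pnorm P ξ / Real.sqrt (eigMin P)) + spec D * euclNorm v) := by
  have hC := spec_nonneg C
  rw [euclNorm_smul, mul_assoc]
  gcongr
  refine (euclNorm_mulVec_le N _).trans ?_
  gcongr
  · exact spec_nonneg N
  refine (euclNorm_add_le _ _).trans ?_
  gcongr
  · exact (euclNorm_mulVec_le C ξ).trans (by gcongr; exact euclNorm_le_pnorm_div P hP ξ)
  · exact euclNorm_mulVec_le D v

end Rayleigh

namespace Matrix.IsSymm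

variable {a : ℕ} {M : Matrix (Fin a) (Fin a) ℝ}

lemma dotProduct_mulVec_comm (hM : M.IsSymm) (x y : Fin a → ℝ) :
    x ⬝ᵥ M *ᵥ y = y ⬝ᵥ M *ᵥ x := by
  rw [dotProduct_mulVec, ← mulVec_transpose, hM.eq, dotProduct_comm]

lemma dotProduct_mulVec_add_smul (hM : M.IsSymm) (x y : Fin a → ℝ) (t : ℝ) :
    (x + t • y) ⬝ᵥ M *ᵥ (x + t • y)
      = x ⬝ᵥ M *ᵥ x + 2 * t * (y ⬝ᵥ M *ᵥ x) + t ^ 2 * (y ⬝ᵥ M *ᵥ y) := by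
  simp only [mulVec_add, mulVec_smul, dotProduct_add, add_dotProduct, dotProduct_smul,
    smul_dotProduct, smul_eq_mul, hM.dotProduct_mulVec_comm x y]
  ring

lemma sq_dotProduct_mulVec_le (hM : M.IsSymm) (hpsd : ∀ w, 0 ≤ w ⬝ᵥ M *ᵥ w)
    (x y : Fin a → ℝ) :
    (y ⬝ᵥ M *ᵥ x) ^ 2 ≤ (x ⬝ᵥ M *ᵥ x) * (y ⬝ᵥ M *ᵥ y) := by
  have hdisc := discrim_le_zero (a := y ⬝ᵥ M *ᵥ y) (b := 2 * (y ⬝ᵥ M *ᵥ x))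
    (c := x ⬝ᵥ M *ᵥ x) fun t => by
      have h := hpsd (x + t • y)
      rw [hM.dotProduct_mulVec_add_smul] at h
      linarith
  rw [discrim] at hdisc
  linarith

lemma mulVec_add_eq_zero_of_forall_le (hM : M.IsSymm) {c u : Fin a → ℝ}
    (hu : ∀ v, u ⬝ᵥ M *ᵥ u + 2 * (c ⬝ᵥ u) ≤ v ⬝ᵥ M *ᵥ v + 2 * (c ⬝ᵥ v)) :
    M *ᵥ u + c = 0 := by
  set g := M *ᵥ u + c
  have hg : g ⬝ᵥ M *ᵥ u + c ⬝ᵥ g = g ⬝ᵥ g := by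
    rw [dotProduct_comm c, ← dotProduct_add]
  have hdisc := discrim_le_zero (a := g ⬝ᵥ M *ᵥ g) (b := 2 * (g ⬝ᵥ g)) (c := 0)
    fun t => by
      have h := hu (u + t • g)
      rw [hM.dotProduct_mulVec_add_smul, dotProduct_add, dotProduct_smul, smul_eq_mul] at h
      rw [← hg]
      linear_combination h
  rw [discrim] at hdisc
  exact dotProduct_self_eq_zero.1 (by nlinarith [sq_nonneg (g ⬝ᵥ g)])

lemma euclNorm_mulVec_le (hM : M.IsSymm) (hpsd : ∀ w, 0 ≤ w ⬝ᵥ M *ᵥ w) {c : ℝ}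
    (hmax : ∀ w, w ⬝ᵥ M *ᵥ w ≤ c * euclNorm w ^ 2) (w : Fin a → ℝ) :
    euclNorm (M *ᵥ w) ≤ c * euclNorm w := by
  rcases eq_or_ne w 0 with rfl | hw
  · simp [euclNorm]
  have hwpos := euclNorm_pos hw
  have hc : 0 ≤ c := nonneg_of_mul_nonneg_left ((hpsd w).trans (hmax w)) (by positivity)
  set v := M *ᵥ w
  have hv : euclNorm v ^ 2 = v ⬝ᵥ M *ᵥ w := euclNorm_sq v
  have hcs : (v ⬝ᵥ M *ᵥ w) ^ 2 ≤ (c * euclNorm w ^ 2) * (c * euclNorm v ^ 2) :=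
    (hM.sq_dotProduct_mulVec_le hpsd w v).trans
      (mul_le_mul (hmax w) (hmax v) (hpsd v) (by positivity))
  have hsq : euclNorm v ^ 2 ≤ (c * euclNorm w) ^ 2 := by
    rw [← hv] at hcs
    nlinarith [euclNorm_nonneg v]
  exact (pow_le_pow_iff_left₀ (euclNorm_nonneg v) (by positivity) two_ne_zero).1 hsq

end Matrix.IsSymm

lemma euclNorm_sub_smul_mulVec_le {a : ℕ} {M : Matrix (Fin a) (Fin a) ℝ} {μ L η : ℝ}
    (hη : 0 ≤ η) (hmin : ∀ w, μ / 2 * euclNorm w ^ 2 ≤ w ⬝ᵥ M *ᵥ w)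
    (hop : ∀ w, euclNorm (M *ᵥ w) ≤ L / 2 * euclNorm w) (w : Fin a → ℝ) :
    euclNorm (w - (2 * η) • M *ᵥ w)
      ≤ Real.sqrt (1 - η * (2 * μ - η * L ^ 2)) * euclNorm w := by
  have hop2 : euclNorm (M *ᵥ w) ^ 2 ≤ (L / 2 * euclNorm w) ^ 2 :=
    pow_le_pow_left₀ (euclNorm_nonneg _) (hop w) 2
  have hsq : euclNorm (w - (2 * η) • M *ᵥ w) ^ 2
      ≤ (1 - η * (2 * μ - η * L ^ 2)) * euclNorm w ^ 2 := by
    have hexp : euclNorm (w - (2 * η) • M *ᵥ w) ^ 2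
        = euclNorm w ^ 2 - 4 * η * (w ⬝ᵥ M *ᵥ w) + 4 * η ^ 2 * euclNorm (M *ᵥ w) ^ 2 := by
      simp only [euclNorm_sq, dotProduct_sub, sub_dotProduct, dotProduct_smul, smul_dotProduct,
        smul_eq_mul, dotProduct_comm (M *ᵥ w) w]
      ring
    nlinarith [hmin w]
  calc euclNorm (w - (2 * η) • M *ᵥ w)
      = Real.sqrt (euclNorm (w - (2 * η) • M *ᵥ w) ^ 2) :=
        (Real.sqrt_sq (euclNorm_nonneg _)).symm
    _ ≤ Real.sqrt ((1 - η * (2 * μ - η * L ^ 2)) * euclNorm w ^ 2) := Real.sqrt_le_sqrt hsq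
    _ = Real.sqrt (1 - η * (2 * μ - η * L ^ 2)) * euclNorm w := by
        rw [Real.sqrt_mul' _ (sq_nonneg _), Real.sqrt_sq (euclNorm_nonneg w)]

lemma sqrt_one_sub_mul_lt_one {μ L η : ℝ} (hη : 0 < η) (hηrange : η < 2 * μ / L ^ 2) :
    Real.sqrt (1 - η * (2 * μ - η * L ^ 2)) < 1 := by
  have hL2 : 0 < L ^ 2 := by
    refine (sq_nonneg L).lt_of_ne fun h => ?_
    rw [← h, div_zero] at hηrange
    exact hηrange.not_gt hη
  rw [Real.sqrt_lt' one_pos]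
  nlinarith [(lt_div_iff₀ hL2).1 hηrange]

noncomputable def phi2HalfHessian {m p : ℕ} (R : Matrix (Fin m) (Fin m) ℝ)
    (Q : Matrix (Fin p) (Fin p) ℝ) (lam ρgen : ℝ) (Hhat : Matrix (Fin p) (Fin m) ℝ) :
    Matrix (Fin m) (Fin m) ℝ :=
  R + lam • (Hhatᵀ * Q * Hhat) + ρgen • 1

section Controller

variable {m p : ℕ} {R : Matrix (Fin m) (Fin m) ℝ} {Q : Matrix (Fin p) (Fin p) ℝ}
  {lam ρgen : ℝ} {Hhat : Matrix (Fin p) (Fin m) ℝ}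

lemma isSymm_phi2HalfHessian (hR : R.IsSymm) (hQ : Q.IsSymm) :
    (phi2HalfHessian R Q lam ρgen Hhat).IsSymm := by
  have hHQH : (Hhatᵀ * Q * Hhat).IsSymm := by
    simp [IsSymm, transpose_mul, hQ.eq, Matrix.mul_assoc]
  exact (hR.add (hHQH.smul lam)).add (isSymm_one.smul ρgen)

lemma Phi2_eq (hQ : Q.IsSymm) (d rk : Fin p → ℝ) (v : Fin m → ℝ) :
    Phi2 R Q lam ρgen Hhat d rk v
      = v ⬝ᵥ phi2HalfHessian R Q lam ρgen Hhat *ᵥ v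
        + 2 * ((lam • ((Hhatᵀ * Q) *ᵥ (d - rk))) ⬝ᵥ v)
        + lam * ((d - rk) ⬝ᵥ Q *ᵥ (d - rk)) := by
  have hcross : ((Hhatᵀ * Q) *ᵥ (d - rk)) ⬝ᵥ v = (Hhat *ᵥ v) ⬝ᵥ Q *ᵥ (d - rk) := by
    rw [dotProduct_comm, ← mulVec_mulVec, dotProduct_mulVec, vecMul_transpose]
  have hquad : v ⬝ᵥ (Hhatᵀ * Q * Hhat) *ᵥ v = (Hhat *ᵥ v) ⬝ᵥ Q *ᵥ (Hhat *ᵥ v) := by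
    rw [← mulVec_mulVec, ← mulVec_mulVec, dotProduct_mulVec, vecMul_transpose]
  have hsq : ∑ i, v i ^ 2 = v ⬝ᵥ v := by simp [dotProduct, sq]
  rw [Phi2, phi2HalfHessian, add_sub_assoc, hsq]
  simp only [mulVec_add, dotProduct_add, add_dotProduct, add_mulVec, smul_mulVec, one_mulVec,
    dotProduct_smul, smul_dotProduct, smul_eq_mul, hcross, hquad,
    hQ.dotProduct_mulVec_comm (d - rk) (Hhat *ᵥ v)]
  ring

lemma phi2HalfHessian_mulVec_add_eq_zero (hR : R.IsSymm) (hQ : Q.IsSymm)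
    {d rk : Fin p → ℝ} {ustar : Fin m → ℝ}
    (hmin : ∀ v, v ≠ ustar →
      Phi2 R Q lam ρgen Hhat d rk ustar < Phi2 R Q lam ρgen Hhat d rk v) :
    phi2HalfHessian R Q lam ρgen Hhat *ᵥ ustar + lam • ((Hhatᵀ * Q) *ᵥ (d - rk)) = 0 := by
  refine (isSymm_phi2HalfHessian hR hQ).mulVec_add_eq_zero_of_forall_le fun v => ?_
  rcases eq_or_ne v ustar with rfl | hv
  · rfl
  · have h := hmin v hv
    rw [Phi2_eq hQ, Phi2_eq hQ] at h
    linarith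

lemma controller_gradient_eq (u : Fin m → ℝ) (z : Fin p → ℝ) :
    R *ᵥ u + lam • (Hhatᵀ *ᵥ (Q *ᵥ (Hhat *ᵥ u + z))) + ρgen • u
      = phi2HalfHessian R Q lam ρgen Hhat *ᵥ u + lam • ((Hhatᵀ * Q) *ᵥ z) := by
  simp only [phi2HalfHessian, add_mulVec, smul_mulVec, one_mulVec, ← mulVec_mulVec, mulVec_add,
    smul_add]
  abel

lemma controller_step_sub_eq {η : ℝ} {u ustar ustar' : Fin m → ℝ} {yr dr e : Fin p → ℝ}
    (hgrad : phi2HalfHessian R Q lam ρgen Hhat *ᵥ ustar + lam • ((Hhatᵀ * Q) *ᵥ dr) = 0)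
    (hy : yr = Hhat *ᵥ u + (dr + e)) :
    u - (2 * η) • (R *ᵥ u + lam • (Hhatᵀ *ᵥ (Q *ᵥ yr)) + ρgen • u) - ustar'
      = (u - ustar - (2 * η) • phi2HalfHessian R Q lam ρgen Hhat *ᵥ (u - ustar))
        + (-(2 * η * lam)) • ((Hhatᵀ * Q) *ᵥ e) + (ustar - ustar') := by
  rw [hy, controller_gradient_eq]
  simp only [mulVec_add, mulVec_sub]
  linear_combination (norm := module) (-(2 * η)) • hgrad

end Controller

lemma output_eq_sensitivity_add {n m p : ℕ} (G : Matrix (Fin n) (Fin n) ℝ)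
    (B : Matrix (Fin n) (Fin m) ℝ) (C : Matrix (Fin p) (Fin n) ℝ) (x dx : Fin n → ℝ)
    (dy : Fin p → ℝ) (u : Fin m → ℝ) :
    C *ᵥ x + dy
      = (C * G * B) *ᵥ u + (C *ᵥ (G *ᵥ dx) + dy) + C *ᵥ (x - G *ᵥ (B *ᵥ u + dx)) := by
  simp only [← mulVec_mulVec, mulVec_sub, mulVec_add]
  abel

theorem stmt11_general {n m p : ℕ}
    (A : Matrix (Fin n) (Fin n) ℝ) (B : Matrix (Fin n) (Fin m) ℝ) (C : Matrix (Fin p) (Fin n) ℝ)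
    (P : Matrix (Fin n) (Fin n) ℝ) (hP : P.PosDef)
    (R : Matrix (Fin m) (Fin m) ℝ) (Q : Matrix (Fin p) (Fin p) ℝ)
    (hR : R.PosSemidef) (hQ : Q.PosSemidef)
    (lam : ℝ) (hlam : 0 ≤ lam) (Hhat : Matrix (Fin p) (Fin m) ℝ)
    (ρgen : ℝ)
    (μ L : ℝ)
    (hμ : μ = 2 * eigMin (R + lam • (Hhatᵀ * Q * Hhat) + ρgen • (1 : Matrix (Fin m) (Fin m) ℝ)))
    (hμpos : 0 < μ)
    (hL : L = 2 * eigMax (R + lam • (Hhatᵀ * Q * Hhat) + ρgen • (1 : Matrix (Fin m) (Fin m) ℝ)))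
    (r : ℕ → Fin p → ℝ) (η : ℝ) (hη : 0 < η) (hηrange : η < 2 * μ / L ^ 2)
    (dx : ℕ → Fin n → ℝ) (dy : ℕ → Fin p → ℝ)
    (x : ℕ → Fin n → ℝ) (u : ℕ → Fin m → ℝ) (y : ℕ → Fin p → ℝ)
    (hout : ∀ k, y k = C *ᵥ x k + dy k)
    (hctrl : ∀ k, u (k + 1) =
      u k - (2 * η) • (R *ᵥ u k + lam • (Hhatᵀ *ᵥ (Q *ᵥ (y k - r k))) + ρgen • u k))
    (ustar : ℕ → Fin m → ℝ)
    (hustar : ∀ k, ∀ v : Fin m → ℝ, v ≠ ustar k →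
      Phi2 R Q lam ρgen Hhat (C *ᵥ ((1 - A)⁻¹ *ᵥ dx k) + dy k) (r k) (ustar k)
        < Phi2 R Q lam ρgen Hhat (C *ᵥ ((1 - A)⁻¹ *ᵥ dx k) + dy k) (r k) v)
    (H : Matrix (Fin p) (Fin m) ℝ) (hH : H = C * (1 - A)⁻¹ * B)
    (xss : ℕ → Fin n → ℝ) (hxss : ∀ k, xss k = (1 - A)⁻¹ *ᵥ (B *ᵥ u k + dx k))
    (α LTy : ℝ)
    (hα : α = Real.sqrt (1 - η * (2 * μ - η * L ^ 2)))
    (hLTy : LTy = 2 * lam * spec (Hhatᵀ * Q)) :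
    (0 ≤ α ∧ α < 1) ∧
      ∀ k : ℕ,
        euclNorm (u (k + 1) - ustar (k + 1))
          ≤ α * euclNorm (u k - ustar k)
            + η * (LTy * spec C / Real.sqrt (eigMin P)) * pnorm P (x k - xss k)
            + η * LTy * spec (H - Hhat) * euclNorm (u k)
            + euclNorm (ustar (k + 1) - ustar k) := by
  have hRs := isHermitian_iff_isSymm.1 hR.1
  have hQs := isHermitian_iff_isSymm.1 hQ.1
  change μ = 2 * eigMin (phi2HalfHessian R Q lam ρgen Hhat) at hμ
  change L = 2 * eigMax (phi2HalfHessian R Q lam ρgen Hhat) at hL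
  set M := phi2HalfHessian R Q lam ρgen Hhat
  have hmin (w : Fin m → ℝ) : μ / 2 * euclNorm w ^ 2 ≤ w ⬝ᵥ M *ᵥ w :=
    hμ ▸ by linarith [eigMin_mul_le M w]
  have hmax (w : Fin m → ℝ) : w ⬝ᵥ M *ᵥ w ≤ L / 2 * euclNorm w ^ 2 :=
    hL ▸ by linarith [le_eigMax_mul M w]
  have hop := (isSymm_phi2HalfHessian hRs hQs).euclNorm_mulVec_le
    (fun w => (by positivity : 0 ≤ μ / 2 * euclNorm w ^ 2).trans (hmin w)) hmax
  subst hα hLTy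
  refine ⟨⟨Real.sqrt_nonneg _, sqrt_one_sub_mul_lt_one hη hηrange⟩, fun k => ?_⟩
  set d := C *ᵥ ((1 - A)⁻¹ *ᵥ dx k) + dy k with hd
  have hy : y k - r k
      = Hhat *ᵥ u k + ((d - r k) + (C *ᵥ (x k - xss k) + (H - Hhat) *ᵥ u k)) := by
    rw [hout k, output_eq_sensitivity_add (1 - A)⁻¹ B C (x k) (dx k) (dy k) (u k), ← hH,
      ← hxss k, ← hd, sub_mulVec]
    abel
  rw [hctrl k, controller_step_sub_eq (phi2HalfHessian_mulVec_add_eq_zero hRs hQs (hustar k)) hy,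
    euclNorm_sub_comm (ustar (k + 1))]
  have hcontr := euclNorm_sub_smul_mulVec_le hη.le hmin hop (u k - ustar k)
  have hdist := euclNorm_smul_mulVec_add_mulVec_le P hP (-(2 * η * lam)) (Hhatᵀ * Q) C
    (H - Hhat) (x k - xss k) (u k)
  rw [abs_neg, abs_of_nonneg (by positivity)] at hdist
  refine (euclNorm_add_add_le _ _ _).trans ?_
  linear_combination hcontr + hdist

/-- Lemma 2 of the paper for the ℓ2-controller (11). -/
theorem stmt11 {n m p : ℕ}
    (A : Matrix (Fin n) (Fin n) ℝ) (B : Matrix (Fin n) (Fin m) ℝ) (C : Matrix (Fin p) (Fin n) ℝ)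
    (hA : spectralRadius ℂ (A.map Complex.ofReal) < 1)
    (Qbar P : Matrix (Fin n) (Fin n) ℝ) (hQbar : Qbar.PosDef) (hP : P.PosDef)
    (hLyap : Aᵀ * P * A - P + Qbar = 0)
    (R : Matrix (Fin m) (Fin m) ℝ) (Q : Matrix (Fin p) (Fin p) ℝ)
    (hR : R.PosSemidef) (hQ : Q.PosSemidef)
    (lam : ℝ) (hlam : 0 ≤ lam) (Hhat : Matrix (Fin p) (Fin m) ℝ)
    (ρgen : ℝ) (hρgen : 0 < ρgen)
    (μ L : ℝ)
    (hμ : μ = 2 * eigMin (R + lam • (Hhatᵀ * Q * Hhat) + ρgen • (1 : Matrix (Fin m) (Fin m) ℝ)))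
    (hμpos : 0 < μ)
    (hL : L = 2 * eigMax (R + lam • (Hhatᵀ * Q * Hhat) + ρgen • (1 : Matrix (Fin m) (Fin m) ℝ)))
    (r : ℕ → Fin p → ℝ) (η : ℝ) (hη : 0 < η) (hηrange : η < 2 * μ / L ^ 2)
    (dx : ℕ → Fin n → ℝ) (dy : ℕ → Fin p → ℝ)
    (x : ℕ → Fin n → ℝ) (u : ℕ → Fin m → ℝ) (y : ℕ → Fin p → ℝ)
    (hdyn : ∀ k, x (k + 1) = A *ᵥ x k + B *ᵥ u k + dx k)
    (hout : ∀ k, y k = C *ᵥ x k + dy k)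
    (hctrl : ∀ k, u (k + 1) =
      u k - (2 * η) • (R *ᵥ u k + lam • (Hhatᵀ *ᵥ (Q *ᵥ (y k - r k))) + ρgen • u k))
    (ustar : ℕ → Fin m → ℝ)
    (hustar : ∀ k, ∀ v : Fin m → ℝ, v ≠ ustar k →
      Phi2 R Q lam ρgen Hhat (C *ᵥ ((1 - A)⁻¹ *ᵥ dx k) + dy k) (r k) (ustar k)
        < Phi2 R Q lam ρgen Hhat (C *ᵥ ((1 - A)⁻¹ *ᵥ dx k) + dy k) (r k) v)
    (H : Matrix (Fin p) (Fin m) ℝ) (hH : H = C * (1 - A)⁻¹ * B)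
    (xss : ℕ → Fin n → ℝ) (hxss : ∀ k, xss k = (1 - A)⁻¹ *ᵥ (B *ᵥ u k + dx k))
    (α LTy : ℝ)
    (hα : α = Real.sqrt (1 - η * (2 * μ - η * L ^ 2)))
    (hLTy : LTy = 2 * lam * spec (Hhatᵀ * Q)) :
    (0 ≤ α ∧ α < 1) ∧
      ∀ k : ℕ,
        euclNorm (u (k + 1) - ustar (k + 1))
          ≤ α * euclNorm (u k - ustar k)
            + η * (LTy * spec C / Real.sqrt (eigMin P)) * pnorm P (x k - xss k)
            + η * LTy * spec (H - Hhat) * euclNorm (u k)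
            + euclNorm (ustar (k + 1) - ustar k) :=
  stmt11_general A B C P hP R Q hR hQ lam hlam Hhat ρgen μ L hμ hμpos hL r η hη hηrange dx dy x u y
    hout hctrl ustar hustar H hH xss hxss α LTy hα hLTy
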